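/- Let C : {0,1}^n × {0,1}^d → {0,1}^m, let k_max ≥ 1 and e be nonnegative integers with k_max ≤ n, and let ε > 0. Suppose C is a k →_ε (k+d−e) condenser for every real number k with 0 ≤ k ≤ k_max. Then the graph corresponding to C admits ((1−4ε)·2^d, 2·k_max·2^e) online matching up to size 2^{k_max}. -/

import Mathlib

open Finset

/-- `P` is a probability distribution on the finite type `α`. -/
def IsDist {α : Type*} [Fintype α] (P : α → ℝ) : Prop :=
  (∀ a, 0 ≤ P a) ∧ ∑ a : α, P a = 1

/-- `P` has min-entropy at least `k`: every point has probability at most `2^(−k)`. -/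
noncomputable def MinEntropyGe {α : Type*} (P : α → ℝ) (k : ℝ) : Prop :=
  ∀ a, P a ≤ (2 : ℝ) ^ (-k)

/-- `P` and `Q` are `ε`-close: their statistical distance is at most `ε`. -/
def CloseDist {α : Type*} [Fintype α] (P Q : α → ℝ) (ε : ℝ) : Prop :=
  ∀ T : Finset α, |∑ a ∈ T, P a - ∑ a ∈ T, Q a| ≤ ε

/-- The distribution of `C(X, U_d)` where `X` has distribution `P` and `U_d` is
uniform on `{0,1}^d` and independent of `X`. -/
noncomputable def outDist {n d m : ℕ} (C : (Fin n → Bool) → (Fin d → Bool) → (Fin m → Bool))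
    (P : (Fin n → Bool) → ℝ) (y : Fin m → Bool) : ℝ :=
  ∑ x : Fin n → Bool, ∑ ρ : Fin d → Bool, if C x ρ = y then P x / 2 ^ d else 0

/-- `C` is a `k →_ε k'` condenser: for every distribution `X` on `{0,1}^n` with
min-entropy at least `k`, the distribution of `C(X, U_d)` is `ε`-close to some
distribution on `{0,1}^m` with min-entropy at least `k'`. -/
noncomputable def IsCondenser {n d m : ℕ}
    (C : (Fin n → Bool) → (Fin d → Bool) → (Fin m → Bool)) (k : ℝ) (ε : ℝ) (k' : ℝ) : Prop :=
  ∀ P : (Fin n → Bool) → ℝ, IsDist P → MinEntropyGe P k →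
    ∃ Q : (Fin m → Bool) → ℝ, IsDist Q ∧ MinEntropyGe Q k' ∧ CloseDist (outDist C P) Q ε

/-- The graph `Γ : L → ι → R` admits `(ℓ, r)` online matching up to size `K` if
there is an assignment function `f` from (list of requests, left node) to sets of
edge labels such that: (1) nodes not in the list get the empty set; (2) a node in
the list gets at least `ℓ` labels, and its assigned set is stable under extending
the list (within the size bound `K`); (3) for every right node `p` and every list,
at most `r` distinct listed nodes have an assigned edge ending in `p`. -/
def OnlineMatching {L R ι : Type*} (Γ : L → ι → R) (ℓ : ℝ) (r K : ℕ) : Prop :=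
  ∃ f : List L → L → Finset ι,
    (∀ S : List L, S.length ≤ K → ∀ x : L,
      (x ∉ S → f S x = ∅) ∧
      (x ∈ S →
        (ℓ ≤ ((f S x).card : ℝ) ∧
         ∀ S' : List L, S'.length ≤ K → S <+: S' → f S x = f S' x))) ∧
    (∀ S : List L, S.length ≤ K → ∀ p : R,
      {x : L | x ∈ S ∧ ∃ i ∈ f S x, Γ x i = p}.ncard ≤ r)

/-!
The matching is built greedily. Let `D = 2^d` and `c = ⌊4εD⌋`. The load of a right vertex is
the number of earlier requests that were assigned an edge into it. When a new request `x`
arrives, let `τ(x)` be the least `t` such that at most `c` edges of `x` go to vertices of load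
`≥ t`, and assign to `x` all its edges into vertices of load `< τ(x)`. Then `x` keeps at least
`(1 - 4ε)D` edges and no load ever exceeds the largest threshold, so it remains to show
`τ(x) ≤ 2 k_max 2^e`.

Applied to the uniform distribution on a set `A` of at most `2^k_max` left vertices, the
condenser property says that `A` sends at most `ε|A|D + |T|2^e` edges into any set `T` of right
vertices. Call `x` an `s`-pusher if it has more than `c` edges into the set `Λ_s` of vertices
of load `≥ s`. A request that raises a load that is already `≥ s` has `τ(x) > s`, so it is an
`s`-pusher; hence every vertex of `Λ_t` has at least `t - s` contributors that are
`s`-pushers. Counting the edges from `s`-pushers into `Λ_s` and into `Λ_{s + 2·2^e}` gives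
`|Λ_{s + 2·2^e}| ≤ |Λ_s| / 3`, so after `k_max` rounds `2^e |Λ_{2 k_max 2^e}| ≤ 2εD`. Hence
every request has at most `3εD`, so at most `c`, edges into `Λ_{2 k_max 2^e}`.
-/

variable {L R ι : Type*}

section EdgeCount

variable [Fintype ι] [DecidableEq R] (Γ : L → ι → R)

def edgesInto (x : L) (T : Finset R) : ℕ := #{i | Γ x i ∈ T}

lemma edgesInto_mono (x : L) {T T' : Finset R} (h : T ⊆ T') :
    edgesInto Γ x T ≤ edgesInto Γ x T' :=
  card_le_card (monotone_filter_right _ fun _ _ hi => h hi)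

lemma edgesInto_empty (x : L) : edgesInto Γ x ∅ = 0 := by
  simp [edgesInto]

def EdgeCountBound (ε : ℝ) (K B : ℕ) : Prop :=
  ∀ A : Finset L, #A ≤ K → ∀ T : Finset R,
    (∑ x ∈ A, (edgesInto Γ x T : ℝ)) ≤ ε * #A * Fintype.card ι + #T * B

end EdgeCount

section UniformOn

variable {α : Type*} [DecidableEq α]

noncomputable def uniformOn (A : Finset α) (a : α) : ℝ := if a ∈ A then (#A : ℝ)⁻¹ else 0

lemma isDist_uniformOn [Fintype α] {A : Finset α} (hA : A.Nonempty) : IsDist (uniformOn A) := by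
  refine ⟨fun a => by unfold uniformOn; split_ifs <;> positivity, ?_⟩
  simp [uniformOn, hA.card_pos.ne']

lemma minEntropyGe_uniformOn (A : Finset α) : MinEntropyGe (uniformOn A) (Real.logb 2 #A) := by
  intro a
  unfold uniformOn
  split_ifs with ha
  · rw [Real.rpow_neg zero_le_two, Real.rpow_logb two_pos (by norm_num)
      (Nat.cast_pos.2 (card_pos.2 ⟨a, ha⟩))]
  · positivity

end UniformOn

lemma MinEntropyGe.sum_le {α : Type*} {Q : α → ℝ} {k : ℝ} (hQ : MinEntropyGe Q k)
    (T : Finset α) : ∑ a ∈ T, Q a ≤ #T * (2 : ℝ) ^ (-k) := by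
  simpa using sum_le_sum fun a (_ : a ∈ T) => hQ a

lemma CloseDist.sum_le {α : Type*} [Fintype α] {P Q : α → ℝ} {ε : ℝ} (h : CloseDist P Q ε)
    (T : Finset α) : ∑ a ∈ T, P a ≤ ∑ a ∈ T, Q a + ε := by
  linarith [(abs_le.1 (h T)).2]

lemma sum_outDist_eq {n d m : ℕ} (C : (Fin n → Bool) → (Fin d → Bool) → (Fin m → Bool))
    (P : (Fin n → Bool) → ℝ) (T : Finset (Fin m → Bool)) :
    ∑ y ∈ T, outDist C P y = (∑ x, P x * edgesInto C x T) / 2 ^ d := by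
  simp only [outDist]
  rw [sum_comm, sum_div]
  refine sum_congr rfl fun x _ => ?_
  rw [sum_comm]
  simp only [sum_ite_eq, ← sum_filter, sum_const, nsmul_eq_mul, edgesInto]
  ring

lemma sum_outDist_uniformOn {n d m : ℕ} (C : (Fin n → Bool) → (Fin d → Bool) → (Fin m → Bool))
    (A : Finset (Fin n → Bool)) (T : Finset (Fin m → Bool)) :
    ∑ y ∈ T, outDist C (uniformOn A) y = (∑ x ∈ A, (edgesInto C x T : ℝ)) / (#A * 2 ^ d) := by
  rw [sum_outDist_eq]
  simp only [uniformOn, ite_mul, zero_mul, sum_ite_mem, univ_inter]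
  rw [← mul_sum, inv_mul_eq_div, div_div]

theorem edgeCountBound_of_isCondenser {n d m k e : ℕ} {ε : ℝ}
    {C : (Fin n → Bool) → (Fin d → Bool) → (Fin m → Bool)}
    (hC : ∀ κ : ℝ, 0 ≤ κ → κ ≤ k → IsCondenser C κ ε (κ + d - e)) :
    EdgeCountBound C ε (2 ^ k) (2 ^ e) := by
  intro A hA T
  rcases A.eq_empty_or_nonempty with rfl | hne
  · simp
  have ha : (0 : ℝ) < #A := Nat.cast_pos.2 hne.card_pos
  have hk0 : 0 ≤ Real.logb 2 #A := Real.logb_nonneg one_lt_two (by exact_mod_cast hne.card_pos)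
  have hkk : Real.logb 2 #A ≤ k := by
    rw [Real.logb_le_iff_le_rpow one_lt_two ha, Real.rpow_natCast]
    exact_mod_cast hA
  obtain ⟨Q, -, hQ, hclose⟩ :=
    hC _ hk0 hkk (uniformOn A) (isDist_uniformOn hne) (minEntropyGe_uniformOn A)
  have hmass : (2 : ℝ) ^ (-(Real.logb 2 #A + d - e)) = 2 ^ e / (#A * 2 ^ d) := by
    rw [neg_sub, Real.rpow_sub two_pos, Real.rpow_add two_pos, Real.rpow_logb two_pos
      (by norm_num) ha, Real.rpow_natCast, Real.rpow_natCast]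
  have key : ∑ y ∈ T, outDist C (uniformOn A) y ≤
      #T * (2 : ℝ) ^ (-(Real.logb 2 #A + d - e)) + ε := by
    linarith [hclose.sum_le T, hQ.sum_le T]
  rw [sum_outDist_uniformOn, hmass, div_le_iff₀ (by positivity)] at key
  refine key.trans (le_of_eq ?_)
  simp only [Fintype.card_fun, Fintype.card_bool, Fintype.card_fin]
  push_cast
  field_simp
  ring

lemma pow_mul_le_of_mul_le {f : ℕ → ℕ} {q a : ℕ} (h : ∀ s, q * f (s + a) ≤ f s) (s j : ℕ) :
    q ^ j * f (s + a * j) ≤ f s := by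
  induction j with
  | zero => simp
  | succ j ih =>
    calc q ^ (j + 1) * f (s + a * (j + 1)) = q ^ j * (q * f (s + a * j + a)) := by ring_nf
      _ ≤ q ^ j * f (s + a * j) := Nat.mul_le_mul_left _ (h _)
      _ ≤ f s := ih

structure GreedyState (L ι : Type*) where
  seen : Finset L
  asg : L → Finset ι

namespace GreedyState

variable [DecidableEq R] (Γ : L → ι → R) (c : ℕ) (st : GreedyState L ι)

def contributors (p : R) : Finset L := {x ∈ st.seen | ∃ i ∈ st.asg x, Γ x i = p}

def load (p : R) : ℕ := #(st.contributors Γ p)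

lemma load_le_card_seen (p : R) : st.load Γ p ≤ #st.seen := card_filter_le _ _

section Counting

variable [DecidableEq L] [Fintype ι]

lemma card_filter_mem_contributors_le (x : L) (T : Finset R) :
    #{p ∈ T | x ∈ st.contributors Γ p} ≤ edgesInto Γ x T := by
  refine card_le_card_of_surjOn (Γ x) ?_
  intro p hp
  obtain ⟨hpT, hx⟩ := mem_filter.1 hp
  obtain ⟨-, i, -, rfl⟩ := mem_filter.1 hx
  exact ⟨i, by simpa [edgesInto] using hpT, rfl⟩

lemma sum_card_contributors_inter_le (A : Finset L) (T : Finset R) :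
    ∑ p ∈ T, #(st.contributors Γ p ∩ A) ≤ ∑ x ∈ A, edgesInto Γ x T := by
  have hswap := sum_card_bipartiteAbove_eq_sum_card_bipartiteBelow
    (s := A) (t := T) (r := fun x p => x ∈ st.contributors Γ p)
  simp only [bipartiteAbove, bipartiteBelow, filter_mem_eq_inter, inter_comm A] at hswap
  rw [← hswap]
  exact sum_le_sum fun x _ => st.card_filter_mem_contributors_le Γ x T

end Counting

section Threshold

variable [Fintype R] [Fintype ι]

def heavy (t : ℕ) : Finset R := {p | t ≤ st.load Γ p}

def pushers (s : ℕ) : Finset L := {x ∈ st.seen | c < edgesInto Γ x (st.heavy Γ s)}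

lemma exists_edgesInto_heavy_le (x : L) : ∃ t, edgesInto Γ x (st.heavy Γ t) ≤ c := by
  refine ⟨#st.seen + 1, ?_⟩
  have hempty : st.heavy Γ (#st.seen + 1) = ∅ :=
    filter_false_of_mem fun p _ => by have := st.load_le_card_seen Γ p; omega
  rw [hempty, edgesInto_empty]
  exact Nat.zero_le c

def threshold (x : L) : ℕ := Nat.find (st.exists_edgesInto_heavy_le Γ c x)

def kept (x : L) : Finset ι := {i | st.load Γ (Γ x i) < st.threshold Γ c x}

def step [DecidableEq L] (x : L) : GreedyState L ι :=
  if x ∈ st.seen then st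
  else ⟨insert x st.seen, Function.update st.asg x (st.kept Γ c x)⟩

lemma card_le_card_kept_add (x : L) : Fintype.card ι ≤ #(st.kept Γ c x) + c := by
  have hdrop : #{i | ¬ st.load Γ (Γ x i) < st.threshold Γ c x} ≤ c := by
    convert Nat.find_spec (st.exists_edgesInto_heavy_le Γ c x) using 2
    simp [edgesInto, heavy, threshold]
  rw [← card_univ, ← card_filter_add_card_filter_not
    (fun i => st.load Γ (Γ x i) < st.threshold Γ c x)]
  exact Nat.add_le_add_left hdrop _

lemma lt_edgesInto_heavy {x : L} {s : ℕ} (hs : s < st.threshold Γ c x) :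
    c < edgesInto Γ x (st.heavy Γ s) :=
  not_le.1 (Nat.find_min (st.exists_edgesInto_heavy_le Γ c x) hs)

lemma threshold_le {x : L} {t : ℕ} (ht : edgesInto Γ x (st.heavy Γ t) ≤ c) :
    st.threshold Γ c x ≤ t :=
  Nat.find_min' _ ht

lemma load_lt_threshold_of_kept {x : L} {p : R} (h : ∃ i ∈ st.kept Γ c x, Γ x i = p) :
    st.load Γ p < st.threshold Γ c x := by
  obtain ⟨i, hi, rfl⟩ := h
  exact (mem_filter.1 hi).2

lemma succ_mul_card_pushers_le (s : ℕ) :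
    (c + 1) * #(st.pushers Γ c s) ≤ ∑ x ∈ st.pushers Γ c s, edgesInto Γ x (st.heavy Γ s) := by
  rw [mul_comm, ← smul_eq_mul, ← sum_const]
  exact sum_le_sum fun x hx => (mem_filter.1 hx).2

end Threshold

section Step

variable [DecidableEq L] [Fintype R] [Fintype ι] {st} {x : L}

lemma step_of_mem (hx : x ∈ st.seen) : st.step Γ c x = st := if_pos hx

lemma seen_step : (st.step Γ c x).seen = insert x st.seen := by
  by_cases hx : x ∈ st.seen
  · rw [step_of_mem Γ c hx, insert_eq_of_mem hx]
  · simp [step, hx]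

lemma asg_step_of_mem {y : L} (hy : y ∈ st.seen) : (st.step Γ c x).asg y = st.asg y := by
  by_cases hx : x ∈ st.seen
  · rw [step_of_mem Γ c hx]
  · have hyx : y ≠ x := by rintro rfl; exact hx hy
    simp [step, hx, hyx]

lemma asg_step_of_ne {y : L} (hyx : y ≠ x) : (st.step Γ c x).asg y = st.asg y := by
  unfold step; split_ifs <;> simp [hyx]

lemma asg_step_self (hx : x ∉ st.seen) : (st.step Γ c x).asg x = st.kept Γ c x := by
  simp [step, hx]

lemma contributors_step (hx : x ∉ st.seen) (p : R) :
    (st.step Γ c x).contributors Γ p =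
      if ∃ i ∈ st.kept Γ c x, Γ x i = p then insert x (st.contributors Γ p)
      else st.contributors Γ p := by
  have hrest : {y ∈ st.seen | ∃ i ∈ (st.step Γ c x).asg y, Γ y i = p} = st.contributors Γ p :=
    filter_congr fun y hy => by rw [asg_step_of_mem Γ c hy]
  rw [contributors, seen_step, filter_insert, asg_step_self Γ c hx, hrest]

lemma contributors_subset_step (p : R) :
    st.contributors Γ p ⊆ (st.step Γ c x).contributors Γ p := by
  by_cases hx : x ∈ st.seen
  · rw [step_of_mem Γ c hx]
  · rw [contributors_step Γ c hx]
    split_ifs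
    exacts [subset_insert _ _, subset_rfl]

lemma heavy_subset_step (t : ℕ) : st.heavy Γ t ⊆ (st.step Γ c x).heavy Γ t :=
  monotone_filter_right _ fun _ _ h => h.trans (card_le_card (contributors_subset_step Γ c _))

lemma pushers_subset_step (s : ℕ) : st.pushers Γ c s ⊆ (st.step Γ c x).pushers Γ c s := by
  intro y hy
  obtain ⟨hseen, hlt⟩ := mem_filter.1 hy
  exact mem_filter.2 ⟨seen_step Γ c ▸ mem_insert_of_mem hseen,
    hlt.trans_le (edgesInto_mono Γ y (heavy_subset_step Γ c s))⟩

lemma mem_pushers_step {s : ℕ} (hs : s < st.threshold Γ c x) :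
    x ∈ (st.step Γ c x).pushers Γ c s :=
  mem_filter.2 ⟨seen_step Γ c ▸ mem_insert_self _ _,
    (st.lt_edgesInto_heavy Γ c hs).trans_le (edgesInto_mono Γ x (heavy_subset_step Γ c s))⟩

lemma load_step_le {p : R} {r : ℕ} (hp : st.load Γ p ≤ r) (hx : st.threshold Γ c x ≤ r) :
    (st.step Γ c x).load Γ p ≤ r := by
  by_cases hseen : x ∈ st.seen
  · rwa [step_of_mem Γ c hseen]
  rw [load, contributors_step Γ c hseen]
  split_ifs with hgain
  · have := st.load_lt_threshold_of_kept Γ c hgain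
    exact (card_insert_le _ _).trans (by rw [← load]; omega)
  · exact hp

lemma card_contributors_sdiff_pushers_step_le {p : R} {s : ℕ}
    (h : #(st.contributors Γ p \ st.pushers Γ c s) ≤ s) :
    #((st.step Γ c x).contributors Γ p \ (st.step Γ c x).pushers Γ c s) ≤ s := by
  have hold : #(st.contributors Γ p \ (st.step Γ c x).pushers Γ c s) ≤ s :=
    (card_le_card (sdiff_subset_sdiff subset_rfl (pushers_subset_step Γ c s))).trans h
  by_cases hseen : x ∈ st.seen
  · rwa [step_of_mem Γ c hseen] at hold ⊢
  rw [contributors_step Γ c hseen]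
  split_ifs with hgain
  · by_cases hx : x ∈ (st.step Γ c x).pushers Γ c s
    · rwa [insert_sdiff_of_mem _ hx]
    · -- `x` counts against the budget `s` only if it joined while the load was below `s`
      have hload : st.load Γ p < s := by
        by_contra! hs
        exact hx (mem_pushers_step Γ c (hs.trans_lt (st.load_lt_threshold_of_kept Γ c hgain)))
      exact (card_le_card sdiff_subset).trans ((card_insert_le _ _).trans hload)
  · exact hold

end Step

section Run

variable [DecidableEq L] [Fintype R] [Fintype ι]

def run (S : List L) : GreedyState L ι := S.foldl (·.step Γ c ·) ⟨∅, fun _ => ∅⟩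

lemma run_append_singleton (S : List L) (x : L) :
    run Γ c (S ++ [x]) = (run Γ c S).step Γ c x := by
  simp [run]

lemma seen_run (S : List L) : (run Γ c S).seen = S.toFinset := by
  induction S using List.reverseRecOn with
  | nil => rfl
  | append_singleton S x ih =>
    rw [run_append_singleton, seen_step, ih, List.toFinset_append, insert_eq, union_comm]
    rfl

lemma asg_run_of_not_mem {S : List L} {x : L} (hx : x ∉ S) : (run Γ c S).asg x = ∅ := by
  induction S using List.reverseRecOn with
  | nil => rfl
  | append_singleton S y ih =>
    rw [List.mem_append, List.mem_singleton, not_or] at hx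
    rw [run_append_singleton, asg_step_of_ne Γ c hx.2, ih hx.1]

lemma asg_run_append {S : List L} {x : L} (hx : x ∈ S) (T : List L) :
    (run Γ c (S ++ T)).asg x = (run Γ c S).asg x := by
  induction T using List.reverseRecOn with
  | nil => rw [List.append_nil]
  | append_singleton T y ih =>
    have hseen : x ∈ (run Γ c (S ++ T)).seen := by simp [seen_run, hx]
    rw [← List.append_assoc, run_append_singleton, asg_step_of_mem Γ c hseen, ih]

lemma card_le_card_asg_run_add {S : List L} {x : L} (hx : x ∈ S) :
    Fintype.card ι ≤ #((run Γ c S).asg x) + c := by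
  induction S using List.reverseRecOn with
  | nil => simp at hx
  | append_singleton S y ih =>
    rw [run_append_singleton]
    by_cases hxS : x ∈ S
    · rw [asg_step_of_mem Γ c (by simpa [seen_run] using hxS)]
      exact ih hxS
    · obtain rfl : x = y := by simpa [hxS] using hx
      rw [asg_step_self Γ c (by simpa [seen_run] using hxS)]
      exact (run Γ c S).card_le_card_kept_add Γ c x

lemma card_contributors_run_sdiff_pushers_le (S : List L) (p : R) (s : ℕ) :
    #((run Γ c S).contributors Γ p \ (run Γ c S).pushers Γ c s) ≤ s := by
  induction S using List.reverseRecOn with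
  | nil => simp [run, contributors]
  | append_singleton S x ih =>
    rw [run_append_singleton]
    exact card_contributors_sdiff_pushers_step_le Γ c ih

lemma load_run_le {S : List L} {r : ℕ} (h : ∀ T, T <+: S → ∀ x, (run Γ c T).threshold Γ c x ≤ r)
    (p : R) : (run Γ c S).load Γ p ≤ r := by
  induction S using List.reverseRecOn with
  | nil => simp [run, load, contributors]
  | append_singleton S x ih =>
    rw [run_append_singleton]
    exact load_step_le Γ c (ih fun T hT => h T (hT.trans (List.prefix_append _ _)))
      (h S (List.prefix_append _ _) x)

lemma card_pushers_run_le (S : List L) (s : ℕ) : #((run Γ c S).pushers Γ c s) ≤ S.length :=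
  (card_filter_le _ _).trans (by rw [seen_run]; exact List.toFinset_card_le S)

lemma sub_mul_card_heavy_run_le (S : List L) (s t : ℕ) :
    (t - s) * #((run Γ c S).heavy Γ t) ≤
      ∑ x ∈ (run Γ c S).pushers Γ c s, edgesInto Γ x ((run Γ c S).heavy Γ t) := by
  set st := run Γ c S
  calc (t - s) * #(st.heavy Γ t)
      ≤ ∑ p ∈ st.heavy Γ t, #(st.contributors Γ p ∩ st.pushers Γ c s) := by
        rw [mul_comm, ← smul_eq_mul, ← sum_const]
        refine sum_le_sum fun p hp => ?_
        have hload : t ≤ st.load Γ p := (mem_filter.1 hp).2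
        have hsplit := card_inter_add_card_sdiff (st.contributors Γ p) (st.pushers Γ c s)
        have hrest : #(st.contributors Γ p \ st.pushers Γ c s) ≤ s :=
          card_contributors_run_sdiff_pushers_le Γ c S p s
        rw [load] at hload
        omega
    _ ≤ _ := st.sum_card_contributors_inter_le Γ _ _

end Run

section Analysis

variable [DecidableEq L] [Fintype R] [Fintype ι] {ε : ℝ} {K B : ℕ} {S : List L}

lemma mul_card_heavy_run_le (hΓ : EdgeCountBound Γ ε K B) (hS : S.length ≤ K) (s : ℕ) :
    (B * #((run Γ c S).heavy Γ (s + 2 * B)) : ℝ) ≤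
      ε * #((run Γ c S).pushers Γ c s) * Fintype.card ι := by
  set st := run Γ c S
  have hcount : (2 * B) * #(st.heavy Γ (s + 2 * B)) ≤
      ∑ x ∈ st.pushers Γ c s, edgesInto Γ x (st.heavy Γ (s + 2 * B)) := by
    simpa using sub_mul_card_heavy_run_le Γ c S s (s + 2 * B)
  have hbound := hΓ _ ((card_pushers_run_le Γ c S s).trans hS) (st.heavy Γ (s + 2 * B))
  have hcount' : ((2 * B * #(st.heavy Γ (s + 2 * B)) : ℕ) : ℝ) ≤ _ := Nat.cast_le.2 hcount
  push_cast at hcount'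
  linarith

lemma three_mul_card_heavy_run_le (hΓ : EdgeCountBound Γ ε K B) (hS : S.length ≤ K)
    (hc : 4 * ε * Fintype.card ι < c + 1) (hB : 0 < B) (s : ℕ) :
    3 * #((run Γ c S).heavy Γ (s + 2 * B)) ≤ #((run Γ c S).heavy Γ s) := by
  set st := run Γ c S
  have hpushers : ((c + 1) * #(st.pushers Γ c s) : ℕ) ≤ (ε * #(st.pushers Γ c s) *
      Fintype.card ι + #(st.heavy Γ s) * B : ℝ) :=
    (Nat.cast_le.2 (st.succ_mul_card_pushers_le Γ c s)).trans (by
      push_cast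
      exact hΓ _ ((card_pushers_run_le Γ c S s).trans hS) _)
  push_cast at hpushers
  have hc' := mul_le_mul_of_nonneg_right hc.le (Nat.cast_nonneg (α := ℝ) #(st.pushers Γ c s))
  have hdecay := mul_card_heavy_run_le Γ c hΓ hS s
  have hB' : (0 : ℝ) < B := Nat.cast_pos.2 hB
  have : (3 * #(st.heavy Γ (s + 2 * B)) : ℝ) * B ≤ #(st.heavy Γ s) * B := by linarith
  exact_mod_cast le_of_mul_le_mul_right this hB'

lemma mul_card_heavy_run_two_mul_le {k : ℕ} (hΓ : EdgeCountBound Γ ε (2 ^ k) B)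
    (hS : S.length ≤ 2 ^ k) (hε : 0 ≤ ε) (hc : 4 * ε * Fintype.card ι < c + 1) (hk : 1 ≤ k)
    (hB : 0 < B) : (B * #((run Γ c S).heavy Γ (2 * k * B)) : ℝ) ≤ 2 * ε * Fintype.card ι := by
  set st := run Γ c S
  set D : ℝ := (Fintype.card ι : ℝ)
  obtain ⟨j, rfl⟩ : ∃ j, k = j + 1 := ⟨k - 1, by omega⟩
  have hdecay : 3 ^ j * #(st.heavy Γ (2 * (j + 1) * B)) ≤ #(st.heavy Γ (2 * B)) := by
    have := pow_mul_le_of_mul_le (f := fun t => #(st.heavy Γ t))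
      (three_mul_card_heavy_run_le Γ c hΓ hS hc hB) (2 * B) j
    rwa [show 2 * B + 2 * B * j = 2 * (j + 1) * B by ring] at this
  have hbase : (B * #(st.heavy Γ (2 * B)) : ℝ) ≤ ε * 2 ^ (j + 1) * D := by
    have := mul_card_heavy_run_le Γ c hΓ hS 0
    rw [zero_add] at this
    refine this.trans ?_
    gcongr
    exact_mod_cast (card_pushers_run_le Γ c S 0).trans hS
  have hεD : 0 ≤ ε * D := by positivity
  have hdecay' : ((3 ^ j * #(st.heavy Γ (2 * (j + 1) * B)) : ℕ) : ℝ) ≤ #(st.heavy Γ (2 * B)) :=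
    Nat.cast_le.2 hdecay
  push_cast at hdecay'
  refine le_of_mul_le_mul_left ?_ (by positivity : (0 : ℝ) < 3 ^ j)
  calc (3 ^ j * (B * #(st.heavy Γ (2 * (j + 1) * B))) : ℝ) ≤ B * #(st.heavy Γ (2 * B)) := by
        linarith [mul_le_mul_of_nonneg_left hdecay' (Nat.cast_nonneg (α := ℝ) B)]
    _ ≤ ε * D * 2 ^ (j + 1) := by linarith
    _ ≤ ε * D * (2 * 3 ^ j) := by gcongr; rw [pow_succ']; gcongr; norm_num
    _ = 3 ^ j * (2 * ε * D) := by ring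

lemma threshold_run_le {k : ℕ} (hΓ : EdgeCountBound Γ ε (2 ^ k) B) (hS : S.length ≤ 2 ^ k)
    (hε : 0 ≤ ε) (hc : 4 * ε * Fintype.card ι < c + 1) (hk : 1 ≤ k) (hB : 0 < B) (x : L) :
    (run Γ c S).threshold Γ c x ≤ 2 * k * B := by
  set H := (run Γ c S).heavy Γ (2 * k * B)
  have hH := mul_card_heavy_run_two_mul_le Γ c hΓ hS hε hc hk hB
  have hx := hΓ {x} (by simp [Nat.one_le_two_pow]) H
  simp only [sum_singleton, card_singleton, Nat.cast_one, mul_one] at hx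
  have hεD : 0 ≤ ε * Fintype.card ι := by positivity
  have hlt : (edgesInto Γ x H : ℝ) < c + 1 := by linarith
  exact threshold_le _ _ _ (Nat.lt_succ_iff.1 (by exact_mod_cast hlt))

end Analysis

end GreedyState

open GreedyState in
theorem onlineMatching_of_edgeCountBound [Fintype ι] [Fintype R] [DecidableEq R]
    {Γ : L → ι → R} {ε : ℝ} {k B : ℕ} (hΓ : EdgeCountBound Γ ε (2 ^ k) B) (hε : 0 ≤ ε) (hk : 1 ≤ k) (hB : 0 < B) :
    OnlineMatching Γ ((1 - 4 * ε) * Fintype.card ι) (2 * k * B) (2 ^ k) := by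
  classical
  set c := ⌊4 * ε * Fintype.card ι⌋₊
  have hc_le : (c : ℝ) ≤ 4 * ε * Fintype.card ι := Nat.floor_le (by positivity)
  have hc_lt : 4 * ε * Fintype.card ι < c + 1 := Nat.lt_floor_add_one _
  refine ⟨fun S x => (run Γ c S).asg x,
    fun S _ x => ⟨asg_run_of_not_mem Γ c, fun hx => ⟨?_, ?_⟩⟩, fun S hS p => ?_⟩
  · have hkept : (Fintype.card ι : ℝ) ≤ #((run Γ c S).asg x) + c := by
      exact_mod_cast card_le_card_asg_run_add Γ c hx
    linarith
  · rintro _ - ⟨T, rfl⟩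
    exact (asg_run_append Γ c hx T).symm
  · have hset : {x | x ∈ S ∧ ∃ i ∈ (run Γ c S).asg x, Γ x i = p} =
        ((run Γ c S).contributors Γ p : Set L) := by
      ext x
      simp [contributors, seen_run]
    rw [hset, Set.ncard_coe_finset]
    exact load_run_le Γ c (fun T hT x => threshold_run_le Γ c hΓ (hT.length_le.trans hS) hε hc_lt
      hk hB x) p

theorem onlineMatching_of_condenser_general
    (n d m kmax e : ℕ) (hkmax1 : 1 ≤ kmax) (ε : ℝ) (hε : 0 < ε)
    (C : (Fin n → Bool) → (Fin d → Bool) → (Fin m → Bool))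
    (hcond : ∀ k : ℝ, 0 ≤ k → k ≤ (kmax : ℝ) →
      IsCondenser C k ε (k + (d : ℝ) - (e : ℝ))) :
    OnlineMatching (fun x (ρ : Fin d → Bool) => C x ρ)
      ((1 - 4 * ε) * (2 : ℝ) ^ d) (2 * kmax * 2 ^ e) (2 ^ kmax) := by
  have h := onlineMatching_of_edgeCountBound (edgeCountBound_of_isCondenser hcond) hε.le hkmax1
    (Nat.two_pow_pos e)
  simpa using h

/-- **Condenser ⇒ online matching (with sharing).**
If `C : {0,1}^n × {0,1}^d → {0,1}^m` is a `k →_ε (k+d−e)` condenser for every real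
`0 ≤ k ≤ k_max` (where `1 ≤ k_max ≤ n` and `ε > 0`), then the graph corresponding
to `C` admits `((1−4ε)·2^d, 2·k_max·2^e)` online matching up to size `2^{k_max}`. -/
theorem onlineMatching_of_condenser
    (n d m kmax e : ℕ) (hkmax1 : 1 ≤ kmax) (hkmax : kmax ≤ n) (ε : ℝ) (hε : 0 < ε)
    (C : (Fin n → Bool) → (Fin d → Bool) → (Fin m → Bool))
    (hcond : ∀ k : ℝ, 0 ≤ k → k ≤ (kmax : ℝ) →
      IsCondenser C k ε (k + (d : ℝ) - (e : ℝ))) :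
    OnlineMatching (fun x (ρ : Fin d → Bool) => C x ρ)
      ((1 - 4 * ε) * (2 : ℝ) ^ d) (2 * kmax * 2 ^ e) (2 ^ kmax) :=
  onlineMatching_of_condenser_general n d m kmax e hkmax1 ε hε C hcond
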